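/- Let $G$ be a finite group, $\pi : A(G) \to G$ the unique group homomorphism with $\pi \circ \varphi_G = \mathrm{id}_G$, and $Z_1 = \ker \pi$. Then the quotient $Z_1 / Tor(Z_1)$ of $Z_1$ by its torsion subgroup is isomorphic, as a group, to the free abelian group on the set of conjugacy classes of $G$. -/

import Mathlib

/-!
Sending each generator `g` of `A(G)` to the basis vector of its conjugacy class defines a
surjection `classCount : A(G) → ℤ^{ConjClasses G}` whose kernel lies in the commutator subgroup,
since `ℤ^{ConjClasses G}` maps back onto the abelianization. Conjugation in `A(G)` acts on the
generators through `π`, so `Z₁` is central; as it has finite index, Schur's theorem makes the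
commutator subgroup finite. Hence the torsion of `A(G)` is exactly `ker classCount`, and
`Z₁ / Tor(Z₁)` embeds into `ℤ^{ConjClasses G}` as a subgroup of finite index, which is free of the
same rank.
-/

open Rack Quandle Quandles

namespace Rack

variable {R : Type*} [Rack R]

theorem closure_range_toEnvelGroup : Subgroup.closure (Set.range (toEnvelGroup R)) = ⊤ := by
  refine eq_top_iff.2 fun a _ => Quotient.inductionOn a fun a => ?_
  induction a with
  | unit => exact one_mem _
  | incl x => exact Subgroup.subset_closure ⟨x, rfl⟩
  | mul a b ha hb => exact mul_mem ha hb
  | inv a ha => exact inv_mem ha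

theorem toEnvelGroup_conj (a : EnvelGroup R) (x : R) :
    a * toEnvelGroup R x * a⁻¹ = toEnvelGroup R (envelAction a x) := by
  have ha : a ∈ Subgroup.closure (Set.range (toEnvelGroup R)) := by
    rw [closure_range_toEnvelGroup]; trivial
  induction ha using Subgroup.closure_induction generalizing x with
  | mem _ hy =>
    obtain ⟨y, rfl⟩ := hy
    rw [envelAction_prop, ShelfHom.map_act, conj_act_eq_conj]
  | one => simp
  | mul a b _ _ ha hb =>
    rw [map_mul, Equiv.Perm.mul_apply, ← ha, ← hb, mul_inv_rev]
    group
  | inv a _ ha =>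
    have h := ha (envelAction a⁻¹ x)
    rw [← Equiv.Perm.mul_apply, ← map_mul, mul_inv_cancel, map_one, Equiv.Perm.one_apply] at h
    rw [← h]
    group

end Rack

open scoped commutatorElement

namespace Subgroup

variable {G : Type*} [Group G]

theorem commutatorElement_mul_center_left {z : G} (hz : z ∈ center G) (a b : G) :
    ⁅a * z, b⁆ = ⁅a, b⁆ := by
  rw [commutatorElement_def, commutatorElement_def, mul_inv_rev, mul_assoc a z b,
    ← mem_center_iff.1 hz b]
  group

theorem commutatorElement_mul_center_right {z : G} (hz : z ∈ center G) (a b : G) :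
    ⁅a, b * z⁆ = ⁅a, b⁆ := by
  rw [← inv_inv ⁅a, b * z⁆, commutatorElement_inv, commutatorElement_mul_center_left hz,
    ← commutatorElement_inv, inv_inv]

theorem finite_commutatorSet_of_finiteIndex_center [(center G).FiniteIndex] :
    Finite (commutatorSet G) := by
  have : Finite (G ⧸ center G) := finite_quotient_of_finiteIndex
  refine Set.Finite.to_subtype <|
    (Set.finite_range fun p : (G ⧸ center G) × (G ⧸ center G) => ⁅p.1.out, p.2.out⁆).subset ?_
  rintro _ ⟨a, b, rfl⟩
  obtain ⟨z, hz⟩ := QuotientGroup.mk_out_eq_mul (center G) a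
  obtain ⟨w, hw⟩ := QuotientGroup.mk_out_eq_mul (center G) b
  refine ⟨((a : G ⧸ center G), (b : G ⧸ center G)), ?_⟩
  simp only [hz, hw, commutatorElement_mul_center_left z.2, commutatorElement_mul_center_right w.2]

end Subgroup

theorem Subgroup.finiteIndex_map_of_surjective {G G' : Type*} [Group G] [Group G']
    (H : Subgroup G) [H.FiniteIndex] {f : G →* G'} (hf : Function.Surjective f) :
    (H.map f).FiniteIndex :=
  ⟨ne_zero_of_dvd_ne_zero FiniteIndex.index_ne_zero (H.index_map_dvd hf)⟩

theorem AddSubgroup.nonempty_addEquiv_of_finiteIndex {M : Type*} [AddCommGroup M]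
    [Module.Free ℤ M] [Module.Finite ℤ M] (A : AddSubgroup M) [A.FiniteIndex] :
    Nonempty (A ≃+ M) :=
  have : Module.Free ℤ A := inferInstanceAs (Module.Free ℤ A.toIntSubmodule)
  have : Module.Finite ℤ A := inferInstanceAs (Module.Finite ℤ A.toIntSubmodule)
  ⟨(LinearEquiv.ofFinrankEq A M A.finrank_eq_of_finiteIndex).toAddEquiv⟩

theorem Subgroup.nonempty_mulEquiv_of_finiteIndex {M : Type*} [AddCommGroup M]
    [Module.Free ℤ M] [Module.Finite ℤ M] (H : Subgroup (Multiplicative M)) [H.FiniteIndex] :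
    Nonempty (H ≃* Multiplicative M) :=
  have : H.toAddSubgroup'.FiniteIndex := ⟨H.index_toAddSubgroup ▸ FiniteIndex.index_ne_zero⟩
  have ⟨e⟩ := H.toAddSubgroup'.nonempty_addEquiv_of_finiteIndex
  -- `Multiplicative H.toAddSubgroup'` and `H` are the same type up to unfolding.
  ⟨AddEquiv.toMultiplicative e⟩

namespace Rack

variable (G : Type*) [Group G]

local notation "φ" => toEnvelGroup (Conj G)

def augmentation : EnvelGroup (Conj G) →* G :=
  toEnvelGroup.map (ShelfHom.id (Conj G))

variable {G}

theorem eq_augmentation {π : EnvelGroup (Conj G) →* G} (hπ : ∀ g : G, π (φ g) = g) :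
    π = augmentation G :=
  MonoidHom.eq_of_eqOn_dense closure_range_toEnvelGroup <| by
    rintro _ ⟨g, rfl⟩
    exact hπ g

theorem envelAction_eq_conj_augmentation :
    envelAction = (MulAut.toPerm G).comp (MulAut.conj.comp (augmentation G)) :=
  MonoidHom.eq_of_eqOn_dense closure_range_toEnvelGroup <| by
    rintro _ ⟨h, rfl⟩
    ext g
    rfl

theorem conj_toEnvelGroup (a : EnvelGroup (Conj G)) (g : G) :
    a * φ g * a⁻¹ = φ (augmentation G a * g * (augmentation G a)⁻¹) := by
  rw [toEnvelGroup_conj, envelAction_eq_conj_augmentation]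
  rfl

theorem ker_augmentation_le_center :
    (augmentation G).ker ≤ Subgroup.center (EnvelGroup (Conj G)) := by
  intro z hz
  have hφ : Set.range φ ⊆ Subgroup.centralizer {z} := by
    rintro _ ⟨g, rfl⟩
    have h := conj_toEnvelGroup z g
    rw [MonoidHom.mem_ker.1 hz, one_mul, inv_one, mul_one, mul_inv_eq_iff_eq_mul] at h
    exact Subgroup.mem_centralizer_singleton_iff.2 h.symm
  refine Subgroup.mem_center_iff.2 fun a => Subgroup.mem_centralizer_singleton_iff.1 ?_
  exact (Subgroup.closure_le _).2 hφ
    (closure_range_toEnvelGroup (R := Conj G) ▸ Subgroup.mem_top a)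

instance [Finite G] : Finite (commutator (EnvelGroup (Conj G))) :=
  have : (Subgroup.center (EnvelGroup (Conj G))).FiniteIndex :=
    Subgroup.finiteIndex_of_le ker_augmentation_le_center
  have := Subgroup.finite_commutatorSet_of_finiteIndex_center (G := EnvelGroup (Conj G))
  inferInstance

variable (G)

noncomputable def classIndicator : Conj G →◃ Conj (Multiplicative (ConjClasses G →₀ ℤ)) where
  toFun g := .ofAdd (Finsupp.single (ConjClasses.mk g) 1)
  map_act' {g h} := by
    rw [conj_act_eq_conj, conj_act_eq_conj, mul_right_comm, mul_inv_cancel, one_mul]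
    exact congrArg _ (congrArg (Finsupp.single · 1)
      (ConjClasses.mk_eq_mk_iff_isConj.2 (isConj_iff.2 ⟨g, rfl⟩).symm))

noncomputable def classCount : EnvelGroup (Conj G) →* Multiplicative (ConjClasses G →₀ ℤ) :=
  toEnvelGroup.map (classIndicator G)

variable {G}

@[simp]
theorem classCount_toEnvelGroup (g : G) :
    classCount G (φ g) = .ofAdd (Finsupp.single (ConjClasses.mk g) 1) := rfl

theorem classCount_surjective : Function.Surjective (classCount G) := by
  suffices h : ∀ f, Multiplicative.ofAdd f ∈ (classCount G).range from fun x => h x.toAdd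
  intro f
  induction f using Finsupp.induction_linear with
  | zero => exact one_mem _
  | add f f' hf hf' => exact mul_mem hf hf'
  | single c n =>
    obtain ⟨g, rfl⟩ := ConjClasses.exists_rep c
    rw [← Finsupp.smul_single_one, ofAdd_zsmul, ← classCount_toEnvelGroup]
    exact zpow_mem (MonoidHom.mem_range.2 ⟨_, rfl⟩) n

def classToAbelianization : ConjClasses G → Abelianization (EnvelGroup (Conj G)) :=
  Quotient.lift (fun g => Abelianization.of (φ g)) fun g h hgh => by
    obtain ⟨c, rfl⟩ := isConj_iff.1 hgh
    rw [← conj_act_eq_conj, ShelfHom.map_act, conj_act_eq_conj, map_mul, map_mul, map_inv,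
      mul_inv_cancel_comm]

noncomputable def abelianizationOfClassCount :
    Multiplicative (ConjClasses G →₀ ℤ) →* Abelianization (EnvelGroup (Conj G)) :=
  AddMonoidHom.toMultiplicativeLeft <|
    Finsupp.liftAddHom fun c => zmultiplesHom _ (.ofMul (classToAbelianization c))

theorem abelianizationOfClassCount_comp_classCount :
    abelianizationOfClassCount.comp (classCount G) = Abelianization.of :=
  MonoidHom.eq_of_eqOn_dense closure_range_toEnvelGroup <| by
    rintro _ ⟨g, rfl⟩
    simp only [abelianizationOfClassCount, MonoidHom.coe_comp, Function.comp_apply,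
      AddMonoidHom.coe_toMultiplicativeLeft, classCount_toEnvelGroup, toAdd_ofAdd,
      Finsupp.liftAddHom_apply, zmultiplesHom_apply, zero_smul, Finsupp.sum_single_index,
      one_smul, toMul_ofMul]
    rfl

theorem ker_classCount_le_commutator :
    (classCount G).ker ≤ commutator (EnvelGroup (Conj G)) := by
  intro z hz
  rw [← Abelianization.ker_of, MonoidHom.mem_ker, ← abelianizationOfClassCount_comp_classCount,
    MonoidHom.comp_apply, MonoidHom.mem_ker.1 hz, map_one]

theorem isOfFinOrder_iff_classCount_eq_one [Finite G] (a : EnvelGroup (Conj G)) :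
    IsOfFinOrder a ↔ classCount G a = 1 := by
  refine ⟨fun ha => ((classCount G).isOfFinOrder ha).eq_one', fun ha => ?_⟩
  have ha' : IsOfFinOrder (⟨a, ker_classCount_le_commutator ha⟩ :
      commutator (EnvelGroup (Conj G))) := isOfFinOrder_of_finite _
  exact (Subgroup.subtype_injective _).isOfFinOrder_iff.2 ha'

end Rack

/-- For a finite group `G`, with `π : A(G) → G` the canonical homomorphism and
`Z₁ = ker π`, the quotient of `Z₁` by its torsion subgroup is isomorphic as a group to the
free abelian group on the set of conjugacy classes of `G`. -/
theorem stmt15 {G : Type*} [Group G] [Finite G]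
    (π : Rack.EnvelGroup (Quandle.Conj G) →* G)
    (hπ : ∀ g : G, π (Rack.toEnvelGroup (Quandle.Conj G) g) = g)
    (T : Subgroup π.ker) [T.Normal]
    (hT : ∀ z : π.ker, z ∈ T ↔ IsOfFinOrder z) :
    Nonempty ((π.ker ⧸ T) ≃* Multiplicative (FreeAbelianGroup (ConjClasses G))) := by
  obtain rfl := eq_augmentation hπ
  let ψ := (classCount G).comp (augmentation G).ker.subtype
  have hψ : ψ.ker = T := by
    ext z
    rw [hT, MonoidHom.mem_ker, MonoidHom.comp_apply, ← isOfFinOrder_iff_classCount_eq_one,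
      (Subgroup.subtype_injective _).isOfFinOrder_iff]
  have : ψ.range.FiniteIndex := by
    rw [MonoidHom.range_comp, Subgroup.range_subtype]
    exact Subgroup.finiteIndex_map_of_surjective _ classCount_surjective
  obtain ⟨e⟩ := ψ.range.nonempty_mulEquiv_of_finiteIndex
  exact ⟨(QuotientGroup.quotientMulEquivOfEq hψ.symm).trans <|
    (QuotientGroup.quotientKerEquivRange ψ).trans <|
      e.trans (FreeAbelianGroup.equivFinsupp _).symm.toMultiplicative⟩
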